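/- arXiv:1506.07124 — 3 statements merged into one kernel-verified Lean document; each statement's English description precedes it below -/
import Mathlib

section
/- Let P be an n×2 and Q an n×m joint probability matrix in standard form, with p = p₁ ∈ (0,1). With μ_k, ν_k^{(w)}, index sets I⁺ = {k : μ_k > 0}, I⁰ = {k : μ_k = 0}, I⁻ = {k : μ_k < 0}, and α_w = (q_w/p)·max{0, max_{k∈I⁺} ν_k^{(w)}/μ_k}, β_w = (q_w/p)·min{1, min_{k∈I⁻} ν_k^{(w)}/μ_k}, one has: Q ≺_c P if and only if (a) ν_k^{(w)} ≤ 0 for all w and all k ∈ I⁰; (b) α_w ≤ β_w for all w; (c) Σ_w α_w ≤ 1; and (d) Σ_w β_w ≥ 1. -/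
open Matrix Finset

/-- Row-stochastic matrix: nonnegative entries, each row sums to 1. -/
def RowStoch {ℓ m : ℕ} (T : Matrix (Fin ℓ) (Fin m) ℝ) : Prop :=
  (∀ y w, 0 ≤ T y w) ∧ ∀ y, ∑ w, T y w = 1

/-- Doubly stochastic matrix. -/
def DStoch {n : ℕ} (D : Matrix (Fin n) (Fin n) ℝ) : Prop :=
  (∀ i j, 0 ≤ D i j) ∧ (∀ i, ∑ j, D i j = 1) ∧ (∀ j, ∑ i, D i j = 1)

/-- Conditional majorization `P ≻_c Q` via classical-conditioned random relabelings:
`Q = ∑ j, D j * P * R j` with each `D j` doubly stochastic, each `R j` entrywise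
nonnegative, and `∑ j, R j` row-stochastic. -/
def CondMaj {n ℓ m : ℕ} (P : Matrix (Fin n) (Fin ℓ) ℝ)
    (Q : Matrix (Fin n) (Fin m) ℝ) : Prop :=
  ∃ (J : ℕ) (D : Fin J → Matrix (Fin n) (Fin n) ℝ)
    (R : Fin J → Matrix (Fin ℓ) (Fin m) ℝ),
    (∀ j, DStoch (D j)) ∧ (∀ j y w, 0 ≤ R j y w) ∧
    RowStoch (∑ j, R j) ∧ Q = ∑ j, D j * P * R j

/-- Joint probability matrix: nonnegative entries summing to one. -/
def JointProb {n ℓ : ℕ} (P : Matrix (Fin n) (Fin ℓ) ℝ) : Prop :=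
  (∀ x y, 0 ≤ P x y) ∧ ∑ x, ∑ y, P x y = 1

/-- Column sum (marginal). -/
noncomputable def ColSum {n m : ℕ} (Q : Matrix (Fin n) (Fin m) ℝ) (w : Fin m) : ℝ :=
  ∑ x, Q x w
/-- Partial column sum of the first `k` entries of column `w`. -/
noncomputable def PartSum {n m : ℕ} (Q : Matrix (Fin n) (Fin m) ℝ) (k : ℕ) (w : Fin m) : ℝ :=
  ∑ x ∈ Finset.univ.filter (fun x : Fin n => (x : ℕ) < k), Q x w

/-- Standard form: columns sorted nonincreasingly, no zero columns, no column a
nonnegative multiple of another, and columns ordered by nonincreasing column sums,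
ties broken lexicographically by nonincreasing partial sums. -/
def StdForm {n m : ℕ} (Q : Matrix (Fin n) (Fin m) ℝ) : Prop :=
  (∀ w, ∀ x x' : Fin n, x ≤ x' → Q x' w ≤ Q x w) ∧
  (∀ w, ∃ x, Q x w ≠ 0) ∧
  (∀ w w' : Fin m, w ≠ w' → ∀ c : ℝ, 0 ≤ c → ¬ (∀ x, Q x w = c * Q x w')) ∧
  (∀ w w' : Fin m, w < w' →
    ColSum Q w' < ColSum Q w ∨
    (ColSum Q w' = ColSum Q w ∧ ∃ k : ℕ,
      (∀ j < k, PartSum Q j w = PartSum Q j w') ∧ PartSum Q k w' < PartSum Q k w))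
/-- `μ_k = ∑_{x ≤ k} (p_{x|1} - p_{x|2})`. -/
noncomputable def muP {n : ℕ} (P : Matrix (Fin n) (Fin 2) ℝ) (k : Fin n) : ℝ :=
  ∑ x ∈ Finset.univ.filter (fun x => x ≤ k), (P x 0 / ColSum P 0 - P x 1 / ColSum P 1)

/-- `ν_k^{(w)} = ∑_{x ≤ k} (q_{x|w} - p_{x|2})`. -/
noncomputable def nuPQ {n m : ℕ} (P : Matrix (Fin n) (Fin 2) ℝ)
    (Q : Matrix (Fin n) (Fin m) ℝ) (w : Fin m) (k : Fin n) : ℝ :=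
  ∑ x ∈ Finset.univ.filter (fun x => x ≤ k), (Q x w / ColSum Q w - P x 1 / ColSum P 1)

/-- `α_w = (q_w/p)·max{0, max_{k∈I⁺} ν_k^{(w)}/μ_k}` (max over the empty set is 0). -/
noncomputable def alphaW {n m : ℕ} (P : Matrix (Fin n) (Fin 2) ℝ)
    (Q : Matrix (Fin n) (Fin m) ℝ) (w : Fin m) : ℝ :=
  (ColSum Q w / ColSum P 0) *
    ((insert (0 : ℝ) ((Finset.univ.filter fun k => 0 < muP P k).image
      fun k => nuPQ P Q w k / muP P k)).max' (Finset.insert_nonempty _ _))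

/-- `β_w = (q_w/p)·min{1, min_{k∈I⁻} ν_k^{(w)}/μ_k}` (min over the empty set is 1). -/
noncomputable def betaW {n m : ℕ} (P : Matrix (Fin n) (Fin 2) ℝ)
    (Q : Matrix (Fin n) (Fin m) ℝ) (w : Fin m) : ℝ :=
  (ColSum Q w / ColSum P 0) *
    ((insert (1 : ℝ) ((Finset.univ.filter fun k => muP P k < 0).image
      fun k => nuPQ P Q w k / muP P k)).min' (Finset.insert_nonempty _ _))

/-!
A doubly stochastic matrix can only lower the partial sums of a nonincreasing vector, and
conversely (Hardy–Littlewood–Pólya, proved by T-transforms) a nonincreasing vector `q` with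
`∑_{x<K} q ≤ ∑_{x<K} c` for all `K` and equal totals is `D c` for a doubly stochastic `D`.
Hence `Q ≺_c P` iff some row-stochastic `R` makes each column of `Q` majorized by the
corresponding column of `P R`.

For two columns write `R 0 w = (q_w / p) t_w` and `R 1 w = (q_w / (1 - p)) (1 - t_w)`.
The partial-sum conditions become `ν_k^{(w)} ≤ t_w μ_k` for all `k`, which together with
`0 ≤ t_w ≤ 1` says: (a) holds at `w` and `t_w` lies between the two ratio bounds whose
rescalings are `α_w` and `β_w`. The row sums of `R` reduce to `∑_w (q_w / p) t_w = 1`, and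
such a choice of `t` exists iff (b)–(d) hold, by the intermediate value theorem.
-/

namespace CondMajorization

variable {n : ℕ}

section PrefixSum

def prefixSum (v : Fin n → ℝ) (K : ℕ) : ℝ :=
  ∑ x ∈ univ.filter (fun x : Fin n => (x : ℕ) < K), v x

lemma prefixSum_zero (v : Fin n → ℝ) : prefixSum v 0 = 0 := by
  simp [prefixSum]

lemma prefixSum_min (v : Fin n → ℝ) (K : ℕ) : prefixSum v (min K n) = prefixSum v K := by
  unfold prefixSum
  congr 1
  ext x
  simp

lemma prefixSum_succ (v : Fin n → ℝ) (i : Fin n) :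
    prefixSum v (i + 1) = prefixSum v i + v i := by
  have : univ.filter (fun x : Fin n => (x : ℕ) < i + 1) =
      insert i (univ.filter fun x : Fin n => (x : ℕ) < i) := by
    ext x
    simp only [mem_filter, mem_univ, true_and, mem_insert, Fin.ext_iff]
    omega
  rw [prefixSum, prefixSum, this, sum_insert (by simp), add_comm]

lemma prefixSum_add (u v : Fin n → ℝ) (K : ℕ) :
    prefixSum (u + v) K = prefixSum u K + prefixSum v K :=
  sum_add_distrib

lemma prefixSum_sub (u v : Fin n → ℝ) (K : ℕ) :
    prefixSum (u - v) K = prefixSum u K - prefixSum v K :=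
  sum_sub_distrib _ _

lemma prefixSum_sum {ι : Type*} (s : Finset ι) (v : ι → Fin n → ℝ) (K : ℕ) :
    prefixSum (∑ j ∈ s, v j) K = ∑ j ∈ s, prefixSum (v j) K := by
  simp only [prefixSum, Finset.sum_apply]
  exact sum_comm

lemma prefixSum_single (i : Fin n) (a : ℝ) (K : ℕ) :
    prefixSum (Pi.single i a) K = if (i : ℕ) < K then a else 0 := by
  simp [prefixSum, Pi.single_apply]

lemma forall_prefixSum_le_iff {q c : Fin n → ℝ} :
    (∀ K, prefixSum q K ≤ prefixSum c K) ↔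
      ∀ k : Fin n, prefixSum q (k + 1) ≤ prefixSum c (k + 1) := by
  refine ⟨fun h k => h _, fun h K => ?_⟩
  rw [← prefixSum_min, ← prefixSum_min c]
  rcases Nat.eq_zero_or_pos (min K n) with h0 | hpos
  · rw [h0, prefixSum_zero, prefixSum_zero]
  · have := h ⟨min K n - 1, by omega⟩
    rwa [Fin.val_mk, Nat.sub_add_cancel hpos] at this

lemma sum_mul_le_prefixSum {v w : Fin n → ℝ} (hv : Antitone v) (hw0 : ∀ i, 0 ≤ w i)
    (hw1 : ∀ i, w i ≤ 1) {K : ℕ} (hK : K ≤ n) (hsum : ∑ i, w i = K) :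
    ∑ i, w i * v i ≤ prefixSum v K := by
  rcases Nat.eq_zero_or_pos n with rfl | hn
  · simp [prefixSum]
  -- termwise `(w i - e i) (v i - t) ≤ 0`, where `t` separates the first `K` entries from the rest
  set t := v ⟨min K (n - 1), by omega⟩
  set e : Fin n → ℝ := fun i => if (i : ℕ) < K then 1 else 0
  have he : prefixSum v K = ∑ i, e i * v i := by
    simp only [prefixSum, e, sum_filter, ite_mul, one_mul, zero_mul]
  have hsum_e : ∑ i, e i = K := by
    simp only [e, ← sum_filter, sum_const, nsmul_eq_mul, mul_one, Fin.card_filter_val_lt,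
      min_eq_right hK]
  have key : ∑ i, (w i - e i) * v i ≤ ∑ i, (w i - e i) * t := by
    refine sum_le_sum fun i _ => ?_
    by_cases hi : (i : ℕ) < K
    · have : t ≤ v i := hv (by simp only [Fin.le_def]; omega)
      simp only [e, hi, if_true]
      nlinarith [hw1 i]
    · have : v i ≤ t := hv (by simp only [Fin.le_def]; omega)
      simp only [e, hi, if_false, sub_zero]
      nlinarith [hw0 i]
  rw [← sum_mul, sum_sub_distrib, hsum, hsum_e, sub_self, zero_mul] at key
  simp only [sub_mul, sum_sub_distrib] at key
  linarith

lemma prefixSum_mulVec_le {D : Matrix (Fin n) (Fin n) ℝ} (hD : D ∈ doublyStochastic ℝ (Fin n))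
    {v : Fin n → ℝ} (hv : Antitone v) (K : ℕ) : prefixSum (D *ᵥ v) K ≤ prefixSum v K := by
  rw [← prefixSum_min, ← prefixSum_min v]
  set K' := min K n
  have hK' : K' ≤ n := min_le_right _ _
  have hswap : prefixSum (D *ᵥ v) K' =
      ∑ i, (∑ x ∈ univ.filter (fun x : Fin n => (x : ℕ) < K'), D x i) * v i := by
    simp only [prefixSum, mulVec, dotProduct, sum_mul]
    exact sum_comm
  rw [hswap]
  refine sum_mul_le_prefixSum hv
    (fun i => sum_nonneg fun x _ => nonneg_of_mem_doublyStochastic hD) (fun i => ?_) hK' ?_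
  · calc _ ≤ ∑ x, D x i := sum_le_sum_of_subset_of_nonneg (filter_subset _ _)
          fun x _ _ => nonneg_of_mem_doublyStochastic hD
      _ = 1 := sum_col_of_mem_doublyStochastic hD i
  · rw [sum_comm]
    simp [sum_row_of_mem_doublyStochastic hD, Fin.card_filter_val_lt, min_eq_right hK']

/-- For antitone vectors this is the majorization `q ≺ c`; `c` itself need not be sorted. -/
def IsMajorizedBy (q c : Fin n → ℝ) : Prop :=
  (∀ K, prefixSum q K ≤ prefixSum c K) ∧ ∑ x, q x = ∑ x, c x

lemma isMajorizedBy_sum {ι : Type*} (s : Finset ι) {q c : ι → Fin n → ℝ}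
    (h : ∀ j ∈ s, IsMajorizedBy (q j) (c j)) :
    IsMajorizedBy (∑ j ∈ s, q j) (∑ j ∈ s, c j) := by
  refine ⟨fun K => ?_, ?_⟩
  · simp only [prefixSum_sum]
    exact sum_le_sum fun j hj => (h j hj).1 K
  · simp only [Finset.sum_apply]
    rw [sum_comm]
    conv_rhs => rw [sum_comm]
    exact sum_congr rfl fun j hj => (h j hj).2

lemma isMajorizedBy_mulVec {D : Matrix (Fin n) (Fin n) ℝ}
    (hD : D ∈ doublyStochastic ℝ (Fin n)) {v : Fin n → ℝ} (hv : Antitone v) :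
    IsMajorizedBy (D *ᵥ v) v :=
  ⟨prefixSum_mulVec_le hD hv, sum_mulVec_of_mem_doublyStochastic hD⟩

lemma IsMajorizedBy.exists_pivot {q c : Fin n → ℝ} (h : IsMajorizedBy q c) (hne : q ≠ c) :
    ∃ i j, i < j ∧ q i < c i ∧ c j < q j ∧ ∀ x, i < x → x < j → q x = c x := by
  have hS : (univ.filter fun x => c x < q x).Nonempty := by
    by_contra hS
    simp only [not_nonempty_iff_eq_empty, filter_eq_empty_iff, mem_univ, true_implies,
      not_lt] at hS
    exact hne (funext fun x => (sum_eq_sum_iff_of_le fun x _ => @hS x).1 h.2 x (mem_univ x))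
  set j := (univ.filter fun x => c x < q x).min' hS
  have hj : c j < q j := (mem_filter.1 (min'_mem _ hS)).2
  have hT : (univ.filter fun x => x < j ∧ q x < c x).Nonempty := by
    by_contra hT
    simp only [not_nonempty_iff_eq_empty, filter_eq_empty_iff, mem_univ, true_implies,
      not_and, not_lt] at hT
    have hle : prefixSum c j ≤ prefixSum q j :=
      sum_le_sum fun x hx => hT (Fin.lt_def.2 (mem_filter.1 hx).2)
    have := h.1 (j + 1)
    rw [prefixSum_succ, prefixSum_succ] at this
    linarith
  set i := (univ.filter fun x => x < j ∧ q x < c x).max' hT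
  obtain ⟨hij, hi⟩ := (mem_filter.1 (max'_mem _ hT)).2
  refine ⟨i, j, hij, hi, hj, fun x hix hxj => le_antisymm ?_ ?_⟩
  · by_contra hlt
    exact (min'_le _ x (by simp [lt_of_not_ge hlt])).not_gt hxj
  · by_contra hlt
    exact (le_max' _ x (by simp [hxj, lt_of_not_ge hlt])).not_gt hix

lemma IsMajorizedBy.sub_single_add_single {q c : Fin n → ℝ} (h : IsMajorizedBy q c)
    {i j : Fin n} (hij : i < j) {δ : ℝ} (hδ : q i + δ ≤ c i)
    (hmid : ∀ x, i < x → x < j → q x = c x) :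
    IsMajorizedBy q (c - Pi.single i δ + Pi.single j δ) := by
  have hgap : ∀ K, (i : ℕ) + 1 ≤ K → K ≤ j → prefixSum q K + δ ≤ prefixSum c K := by
    intro K hK
    induction K, hK using Nat.le_induction with
    | base =>
      intro _
      rw [prefixSum_succ, prefixSum_succ]
      linarith [h.1 i]
    | succ K hK ih =>
      intro hKj
      have hKn : K < n := by omega
      have hx := hmid ⟨K, hKn⟩ (Fin.lt_def.2 (by simp; omega)) (Fin.lt_def.2 (by simp; omega))
      have hq := prefixSum_succ q ⟨K, hKn⟩
      have hc := prefixSum_succ c ⟨K, hKn⟩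
      simp only at hq hc
      linarith [ih (by omega)]
  refine ⟨fun K => ?_, by simpa [sum_add_distrib, sum_sub_distrib] using h.2⟩
  have hij' : (i : ℕ) < j := hij
  rw [prefixSum_add, prefixSum_sub, prefixSum_single, prefixSum_single]
  by_cases hjK : (j : ℕ) < K
  · simp only [hjK, hij'.trans hjK, if_true]
    linarith [h.1 K]
  by_cases hiK : (i : ℕ) < K
  · simp only [hiK, hjK, if_true, if_false]
    linarith [hgap K hiK (by omega)]
  · simp only [hiK, hjK, if_false]
    linarith [h.1 K]

end PrefixSum

section Transfer

variable {ι : Type*} [Fintype ι] [DecidableEq ι]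

lemma transfer_mem_doublyStochastic (i j : ι) {θ : ℝ} (h0 : 0 ≤ θ) (h1 : θ ≤ 1) :
    (1 - θ) • (1 : Matrix ι ι ℝ) + θ • (Equiv.swap i j).permMatrix ℝ ∈
      doublyStochastic ℝ ι :=
  convex_doublyStochastic (one_mem _) permMatrix_mem_doublyStochastic (by linarith) h0
    (by ring)

lemma transfer_mulVec {i j : ι} (hij : i ≠ j) (θ : ℝ) (c : ι → ℝ) :
    ((1 - θ) • (1 : Matrix ι ι ℝ) + θ • (Equiv.swap i j).permMatrix ℝ) *ᵥ c =
      c - Pi.single i (θ * (c i - c j)) + Pi.single j (θ * (c i - c j)) := by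
  ext x
  simp only [add_mulVec, smul_mulVec, one_mulVec, permMatrix_mulVec, Pi.add_apply,
    Pi.sub_apply, Pi.smul_apply, smul_eq_mul, Function.comp_apply, Pi.single_apply,
    Equiv.swap_apply_def]
  split_ifs <;> simp_all <;> ring

lemma card_ne_sub_single_add_single_lt {q c : ι → ℝ} {i j : ι} (hij : i ≠ j)
    (hi : q i < c i) (hj : c j < q j) {δ : ℝ} (hδ : q i = c i - δ ∨ q j = c j + δ) :
    #{x | q x ≠ (c - Pi.single i δ + Pi.single j δ : ι → ℝ) x} < #{x | q x ≠ c x} := by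
  refine card_lt_card ((ssubset_iff_of_subset fun x hx => ?_).2 ?_)
  · simp only [mem_filter, mem_univ, true_and] at hx ⊢
    intro hqx
    have hxi : x ≠ i := by rintro rfl; exact hi.ne hqx
    have hxj : x ≠ j := by rintro rfl; exact hj.ne' hqx
    exact hx (by simp [hxi, hxj, hqx])
  · rcases hδ with hδ | hδ
    · exact ⟨i, by simp [hi.ne], by simp [hij, hδ]⟩
    · exact ⟨j, by simp [hj.ne'], by simp [hij.symm, hδ]⟩

end Transfer

theorem exists_mem_doublyStochastic_mulVec_eq {q c : Fin n → ℝ} (hq : Antitone q)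
    (h : IsMajorizedBy q c) : ∃ D ∈ doublyStochastic ℝ (Fin n), q = D *ᵥ c := by
  induction hd : #{x | q x ≠ c x} using Nat.strong_induction_on generalizing c with
  | _ d ih =>
  by_cases hqc : q = c
  · exact ⟨1, one_mem _, by simp [hqc]⟩
  obtain ⟨i, j, hij, hi, hj, hmid⟩ := h.exists_pivot hqc
  have hqji : q j ≤ q i := hq hij.le
  have hcij : 0 < c i - c j := by linarith
  -- move `δ` from `c i` to `c j`, as much as keeps `q i ≤ c i` and `c j ≤ q j`
  set δ := min (c i - q i) (q j - c j)
  set c' := c - Pi.single i δ + Pi.single j δ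
  have hδi : δ ≤ c i - q i := min_le_left _ _
  have hδj : δ ≤ q j - c j := min_le_right _ _
  have hδ : q i = c i - δ ∨ q j = c j + δ := by
    rcases min_choice (c i - q i) (q j - c j) with h | h <;> [left; right] <;> linarith
  obtain ⟨T, hT, hTc⟩ : ∃ T ∈ doublyStochastic ℝ (Fin n), T *ᵥ c = c' :=
    ⟨_, transfer_mem_doublyStochastic i j (θ := δ / (c i - c j))
      (div_nonneg (le_min (by linarith) (by linarith)) hcij.le)
      ((div_le_one hcij).2 (by linarith)),
      by rw [transfer_mulVec hij.ne, div_mul_cancel₀ _ hcij.ne']⟩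
  obtain ⟨D, hD, hqD⟩ := ih _ (hd ▸ card_ne_sub_single_add_single_lt hij.ne hi hj hδ)
    (h.sub_single_add_single hij (by linarith) hmid) rfl
  exact ⟨D * T, mul_mem hD hT, by rw [← mulVec_mulVec, hTc, hqD]⟩

section Relabelings

variable {ℓ m : ℕ}

lemma dStoch_iff_mem_doublyStochastic {D : Matrix (Fin n) (Fin n) ℝ} :
    DStoch D ↔ D ∈ doublyStochastic ℝ (Fin n) :=
  mem_doublyStochastic_iff_sum.symm

lemma antitone_mul_apply {P : Matrix (Fin n) (Fin ℓ) ℝ} (hP : ∀ y, Antitone fun x => P x y)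
    {R : Matrix (Fin ℓ) (Fin m) ℝ} (hR : ∀ y w, 0 ≤ R y w) (w : Fin m) :
    Antitone fun x => (P * R) x w :=
  fun _ _ h => by
    simp only [mul_apply]
    exact sum_le_sum fun y _ => mul_le_mul_of_nonneg_right (hP y h) (hR y w)

lemma exists_rowStoch_of_condMaj {P : Matrix (Fin n) (Fin ℓ) ℝ} {Q : Matrix (Fin n) (Fin m) ℝ}
    (hP : ∀ y, Antitone fun x => P x y) (h : CondMaj P Q) :
    ∃ R : Matrix (Fin ℓ) (Fin m) ℝ, RowStoch R ∧
      ∀ w, IsMajorizedBy (fun x => Q x w) (fun x => (P * R) x w) := by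
  obtain ⟨J, D, R, hD, hR, hRS, rfl⟩ := h
  refine ⟨∑ j, R j, hRS, fun w => ?_⟩
  convert isMajorizedBy_sum univ fun j _ => isMajorizedBy_mulVec
    (dStoch_iff_mem_doublyStochastic.1 (hD j)) (antitone_mul_apply hP (hR j) w) using 1 <;> ext x
  · simp [Matrix.sum_apply, Matrix.mul_assoc, mulVec, dotProduct, mul_apply]
  · simp [Matrix.mul_sum, Matrix.sum_apply]

lemma condMaj_of_rowStoch {P : Matrix (Fin n) (Fin ℓ) ℝ} {Q : Matrix (Fin n) (Fin m) ℝ}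
    (hQ : ∀ w, Antitone fun x => Q x w) {R : Matrix (Fin ℓ) (Fin m) ℝ} (hR : RowStoch R)
    (h : ∀ w, IsMajorizedBy (fun x => Q x w) (fun x => (P * R) x w)) : CondMaj P Q := by
  choose D hD hQD using fun w => exists_mem_doublyStochastic_mulVec_eq (hQ w) (h w)
  -- the `w`-th relabeling keeps only the `w`-th column of `R`
  refine ⟨m, D, fun w => R * diagonal (Pi.single w (1 : ℝ)),
    fun w => dStoch_iff_mem_doublyStochastic.2 (hD w), fun w y w' => ?_, ?_, ?_⟩
  · simp only [mul_diagonal, Pi.single_apply]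
    split_ifs
    exacts [by simpa using hR.1 y w', by simp]
  · convert hR
    ext y w'
    simp [Matrix.sum_apply, mul_diagonal, Pi.single_apply]
  · ext x w'
    simp only [Matrix.sum_apply, ← Matrix.mul_assoc, mul_diagonal, Pi.single_apply, mul_ite,
      mul_one, mul_zero, sum_ite_eq, mem_univ, if_true]
    rw [congrFun (hQD w') x, Matrix.mul_assoc]
    rfl

end Relabelings

section TwoColumns

variable {m : ℕ}

lemma colSum_pos {Q : Matrix (Fin n) (Fin m) ℝ} {w : Fin m} (h0 : ∀ x, 0 ≤ Q x w)
    (hw : ∃ x, Q x w ≠ 0) : 0 < ColSum Q w := by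
  obtain ⟨x, hx⟩ := hw
  exact sum_pos' (fun x _ => h0 x) ⟨x, mem_univ x, (h0 x).lt_of_ne' hx⟩

lemma sum_colSum_eq_one {Q : Matrix (Fin n) (Fin m) ℝ} (hQ : JointProb Q) :
    ∑ w, ColSum Q w = 1 := by
  rw [← hQ.2]
  exact sum_comm

lemma colSum_zero_add_colSum_one {P : Matrix (Fin n) (Fin 2) ℝ} (hP : JointProb P) :
    ColSum P 0 + ColSum P 1 = 1 := by
  rw [← sum_colSum_eq_one hP, Fin.sum_univ_two]

variable {P : Matrix (Fin n) (Fin 2) ℝ} {Q : Matrix (Fin n) (Fin m) ℝ}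

lemma filter_le_eq_filter_val_lt (k : Fin n) :
    univ.filter (fun x : Fin n => x ≤ k) = univ.filter fun x : Fin n => (x : ℕ) < k + 1 :=
  filter_congr fun x _ => by rw [Fin.le_def]; omega

lemma muP_eq (k : Fin n) :
    muP P k = prefixSum (fun x => P x 0) (k + 1) / ColSum P 0 -
      prefixSum (fun x => P x 1) (k + 1) / ColSum P 1 := by
  rw [muP, filter_le_eq_filter_val_lt, sum_sub_distrib, ← sum_div, ← sum_div]
  rfl

lemma nuPQ_eq (w : Fin m) (k : Fin n) :
    nuPQ P Q w k = prefixSum (fun x => Q x w) (k + 1) / ColSum Q w -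
      prefixSum (fun x => P x 1) (k + 1) / ColSum P 1 := by
  rw [nuPQ, filter_le_eq_filter_val_lt, sum_sub_distrib, ← sum_div, ← sum_div]
  rfl

lemma mul_apply_fin_two {R : Matrix (Fin 2) (Fin m) ℝ} (x : Fin n) (w : Fin m) :
    (P * R) x w = R 0 w * P x 0 + R 1 w * P x 1 := by
  simp [mul_apply, Fin.sum_univ_two, mul_comm]

lemma isMajorizedBy_iff_forall_nuPQ_le (hp : 0 < ColSum P 0) (hp' : 0 < ColSum P 1) {w : Fin m}
    (hq : 0 < ColSum Q w) (t : ℝ) :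
    IsMajorizedBy (fun x => Q x w) (fun x =>
      ColSum Q w / ColSum P 0 * t * P x 0 + ColSum Q w / ColSum P 1 * (1 - t) * P x 1) ↔
      ∀ k, nuPQ P Q w k ≤ t * muP P k := by
  have hlin : ∀ a b K, prefixSum (fun x => a * P x 0 + b * P x 1) K =
      a * prefixSum (fun x => P x 0) K + b * prefixSum (fun x => P x 1) K := by
    intro a b K
    simp only [prefixSum, sum_add_distrib, mul_sum]
  have htot : ∑ x, Q x w = ∑ x,
      (ColSum Q w / ColSum P 0 * t * P x 0 + ColSum Q w / ColSum P 1 * (1 - t) * P x 1) := by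
    rw [sum_add_distrib, ← mul_sum, ← mul_sum]
    change ColSum Q w = _ * ColSum P 0 + _ * ColSum P 1
    field_simp
    ring
  rw [IsMajorizedBy, and_iff_left htot, forall_prefixSum_le_iff]
  refine forall_congr' fun k => ?_
  rw [hlin, nuPQ_eq, muP_eq, ← sub_nonneg, ← sub_nonneg (a := t * _)]
  set a := prefixSum (fun x => P x 0) (k + 1)
  set b := prefixSum (fun x => P x 1) (k + 1)
  set c := prefixSum (fun x => Q x w) (k + 1)
  have key : ColSum Q w / ColSum P 0 * t * a + ColSum Q w / ColSum P 1 * (1 - t) * b - c =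
      ColSum Q w *
        (t * (a / ColSum P 0 - b / ColSum P 1) - (c / ColSum Q w - b / ColSum P 1)) := by
    field_simp
    ring
  rw [key, mul_nonneg_iff_of_pos_left hq]

lemma exists_rowStoch_iff_exists_ratio (hp : 0 < ColSum P 0) (hp' : 0 < ColSum P 1)
    (hpp : ColSum P 0 + ColSum P 1 = 1) (hq : ∀ w, 0 < ColSum Q w)
    (hqq : ∑ w, ColSum Q w = 1) :
    (∃ R : Matrix (Fin 2) (Fin m) ℝ, RowStoch R ∧
        ∀ w, IsMajorizedBy (fun x => Q x w) (fun x => (P * R) x w)) ↔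
      ∃ t : Fin m → ℝ,
        (∀ w, 0 ≤ t w ∧ t w ≤ 1 ∧ ∀ k, nuPQ P Q w k ≤ t w * muP P k) ∧
        ∑ w, ColSum Q w / ColSum P 0 * t w = 1 := by
  have hs : ∀ w, 0 < ColSum Q w / ColSum P 0 := fun w => div_pos (hq w) hp
  constructor
  · rintro ⟨R, hR, hmaj⟩
    refine ⟨fun w => R 0 w / (ColSum Q w / ColSum P 0), fun w => ?_, ?_⟩
    · have htot : ColSum Q w = R 0 w * ColSum P 0 + R 1 w * ColSum P 1 := by
        have := (hmaj w).2
        simp only [mul_apply_fin_two, sum_add_distrib, ← mul_sum] at this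
        exact this
      have hcol : (fun x => (P * R) x w) = fun x =>
          ColSum Q w / ColSum P 0 * (R 0 w / (ColSum Q w / ColSum P 0)) * P x 0 +
            ColSum Q w / ColSum P 1 * (1 - R 0 w / (ColSum Q w / ColSum P 0)) * P x 1 := by
        have hR1 :
            ColSum Q w / ColSum P 1 * (1 - R 0 w / (ColSum Q w / ColSum P 0)) = R 1 w := by
          have := (hq w).ne'
          field_simp
          linarith
        ext x
        rw [mul_apply_fin_two, mul_div_cancel₀ _ (hs w).ne', hR1]
      refine ⟨div_nonneg (hR.1 0 w) (hs w).le, ?_,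
        (isMajorizedBy_iff_forall_nuPQ_le hp hp' (hq w) _).1 (hcol ▸ hmaj w)⟩
      rw [div_le_one (hs w), le_div_iff₀ hp]
      nlinarith [hR.1 1 w]
    · simp only [mul_div_cancel₀ _ (hs _).ne']
      exact hR.2 0
  · rintro ⟨t, ht, hsum⟩
    refine ⟨of ![fun w => ColSum Q w / ColSum P 0 * t w,
      fun w => ColSum Q w / ColSum P 1 * (1 - t w)],
      ⟨fun y w => ?_, fun y => ?_⟩, fun w => ?_⟩
    · fin_cases y
      exacts [mul_nonneg (hs w).le (ht w).1,
        mul_nonneg (div_pos (hq w) hp').le (sub_nonneg.2 (ht w).2.1)]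
    · fin_cases y
      · exact hsum
      · change ∑ w, ColSum Q w / ColSum P 1 * (1 - t w) = 1
        have hterm w : ColSum Q w / ColSum P 1 * (1 - t w) =
            (ColSum Q w - ColSum P 0 * (ColSum Q w / ColSum P 0 * t w)) / ColSum P 1 := by
          field_simp
        rw [sum_congr rfl fun w _ => hterm w, ← sum_div, sum_sub_distrib, ← mul_sum, hqq, hsum,
          div_eq_one_iff_eq hp'.ne']
        linarith
    · convert (isMajorizedBy_iff_forall_nuPQ_le hp hp' (hq w) (t w)).2 (ht w).2.2 using 2
      simp [mul_apply_fin_two]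

end TwoColumns

section Ratios

variable {ι : Type*} [Fintype ι]

-- `alphaW P Q w` and `betaW P Q w` unfold to `q_w / p` times `lowerRatio` and `upperRatio`
-- of `muP P` and `nuPQ P Q w`.
noncomputable def lowerRatio (μ ν : ι → ℝ) : ℝ :=
  (insert (0 : ℝ) ((univ.filter fun k => 0 < μ k).image fun k => ν k / μ k)).max'
    (insert_nonempty _ _)

noncomputable def upperRatio (μ ν : ι → ℝ) : ℝ :=
  (insert (1 : ℝ) ((univ.filter fun k => μ k < 0).image fun k => ν k / μ k)).min'
    (insert_nonempty _ _)

lemma lowerRatio_le_iff {μ ν : ι → ℝ} {t : ℝ} :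
    lowerRatio μ ν ≤ t ↔ 0 ≤ t ∧ ∀ k, 0 < μ k → ν k ≤ t * μ k := by
  simp +contextual [lowerRatio, max'_le_iff, div_le_iff₀]

lemma le_upperRatio_iff {μ ν : ι → ℝ} {t : ℝ} :
    t ≤ upperRatio μ ν ↔ t ≤ 1 ∧ ∀ k, μ k < 0 → ν k ≤ t * μ k := by
  simp +contextual [upperRatio, le_min'_iff, le_div_iff_of_neg]

lemma ratio_bounds_iff {μ ν : ι → ℝ} {t : ℝ} :
    (0 ≤ t ∧ t ≤ 1 ∧ ∀ k, ν k ≤ t * μ k) ↔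
      (∀ k, μ k = 0 → ν k ≤ 0) ∧ lowerRatio μ ν ≤ t ∧ t ≤ upperRatio μ ν := by
  rw [lowerRatio_le_iff, le_upperRatio_iff]
  constructor
  · rintro ⟨h0, h1, h⟩
    exact ⟨fun k hk => by simpa [hk] using h k, ⟨h0, fun k _ => h k⟩,
      ⟨h1, fun k _ => h k⟩⟩
  · rintro ⟨hzero, ⟨h0, hpos⟩, ⟨h1, hneg⟩⟩
    refine ⟨h0, h1, fun k => ?_⟩
    rcases lt_trichotomy (μ k) 0 with hk | hk | hk
    · exact hneg k hk
    · simpa [hk] using hzero k hk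
    · exact hpos k hk

lemma exists_sum_mul_eq_one_iff {s a b : ι → ℝ} (hs : ∀ i, 0 < s i) :
    (∃ t : ι → ℝ, (∀ i, a i ≤ t i ∧ t i ≤ b i) ∧ ∑ i, s i * t i = 1) ↔
      (∀ i, s i * a i ≤ s i * b i) ∧ ∑ i, s i * a i ≤ 1 ∧ 1 ≤ ∑ i, s i * b i := by
  constructor
  · rintro ⟨t, ht, hsum⟩
    have hat i := mul_le_mul_of_nonneg_left (ht i).1 (hs i).le
    have htb i := mul_le_mul_of_nonneg_left (ht i).2 (hs i).le
    exact ⟨fun i => (hat i).trans (htb i), hsum ▸ sum_le_sum fun i _ => hat i,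
      hsum ▸ sum_le_sum fun i _ => htb i⟩
  · rintro ⟨hab, ha, hb⟩
    have hab' i : a i ≤ b i := le_of_mul_le_mul_left (hab i) (hs i)
    obtain ⟨θ, ⟨h0, h1⟩, hθ⟩ := intermediate_value_Icc zero_le_one
      (f := fun θ : ℝ => ∑ i, s i * ((1 - θ) * a i + θ * b i)) (by fun_prop)
      ⟨by simpa using ha, by simpa using hb⟩
    exact ⟨fun i => (1 - θ) * a i + θ * b i,
      fun i => ⟨by nlinarith [hab' i], by nlinarith [hab' i]⟩, hθ⟩

end Ratios

end CondMajorization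

open CondMajorization in
theorem stmt14_general {n m : ℕ} (P : Matrix (Fin n) (Fin 2) ℝ) (Q : Matrix (Fin n) (Fin m) ℝ)
    (hP : JointProb P) (hQ : JointProb Q) (hPstd : StdForm P) (hQstd : StdForm Q) :
    CondMaj P Q ↔
      ((∀ w k, muP P k = 0 → nuPQ P Q w k ≤ 0) ∧
       (∀ w, alphaW P Q w ≤ betaW P Q w) ∧
       (∑ w, alphaW P Q w ≤ 1) ∧
       (1 ≤ ∑ w, betaW P Q w)) := by
  have hp y : 0 < ColSum P y := colSum_pos (fun x => hP.1 x y) (hPstd.2.1 y)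
  have hq w : 0 < ColSum Q w := colSum_pos (fun x => hQ.1 x w) (hQstd.2.1 w)
  calc CondMaj P Q
      ↔ ∃ R : Matrix (Fin 2) (Fin m) ℝ, RowStoch R ∧
          ∀ w, IsMajorizedBy (fun x => Q x w) (fun x => (P * R) x w) :=
        ⟨exists_rowStoch_of_condMaj hPstd.1,
          fun ⟨_, hR, h⟩ => condMaj_of_rowStoch hQstd.1 hR h⟩
    _ ↔ ∃ t : Fin m → ℝ,
          (∀ w, 0 ≤ t w ∧ t w ≤ 1 ∧ ∀ k, nuPQ P Q w k ≤ t w * muP P k) ∧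
          ∑ w, ColSum Q w / ColSum P 0 * t w = 1 :=
        exists_rowStoch_iff_exists_ratio (hp 0) (hp 1)
          (colSum_zero_add_colSum_one hP) hq (sum_colSum_eq_one hQ)
    _ ↔ (∀ w k, muP P k = 0 → nuPQ P Q w k ≤ 0) ∧ ∃ t : Fin m → ℝ,
          (∀ w, lowerRatio (muP P) (nuPQ P Q w) ≤ t w ∧
            t w ≤ upperRatio (muP P) (nuPQ P Q w)) ∧
          ∑ w, ColSum Q w / ColSum P 0 * t w = 1 := by
        simp only [ratio_bounds_iff, forall_and]
        exact ⟨fun ⟨t, ⟨h0, h⟩, hsum⟩ => ⟨h0, t, h, hsum⟩,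
          fun ⟨h0, t, h, hsum⟩ => ⟨t, ⟨h0, h⟩, hsum⟩⟩
    _ ↔ _ := by
        rw [exists_sum_mul_eq_one_iff fun w => div_pos (hq w) (hp 0)]
        rfl

theorem stmt14 {n m : ℕ} (P : Matrix (Fin n) (Fin 2) ℝ) (Q : Matrix (Fin n) (Fin m) ℝ)
    (hP : JointProb P) (hQ : JointProb Q) (hPstd : StdForm P) (hQstd : StdForm Q)
    (hp0 : 0 < ColSum P 0) (hp1 : ColSum P 0 < 1) :
    CondMaj P Q ↔
      ((∀ w k, muP P k = 0 → nuPQ P Q w k ≤ 0) ∧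
       (∀ w, alphaW P Q w ≤ betaW P Q w) ∧
       (∑ w, alphaW P Q w ≤ 1) ∧
       (1 ≤ ∑ w, betaW P Q w)) :=
  stmt14_general P Q hP hQ hPstd hQstd
end

section
/- Let P be an n×2 and Q an n×m joint probability matrix in standard form with p = p₁ ∈ (0,1). Suppose p^{|2} ≺ p^{|1} (majorization) and q^{|w} ≺ p^{|1} for all w. Then Q ≺_c P if and only if p ≥ Σ_{w=1}^m q_w max{0, h_w}, where h_w = max_{k: μ_k > 0} ν_k^{(w)}/μ_k, with μ_k = Σ_{x=1}^k (p_{x|1} − p_{x|2}) and ν_k^{(w)} = Σ_{x=1}^k (q_{x|w} − p_{x|2}). -/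
open Matrix Finset

/-- Nonincreasing rearrangement of a vector. -/
noncomputable def sortDesc {n : ℕ} (u : Fin n → ℝ) : Fin n → ℝ :=
  fun i => u (Tuple.sort (fun j => -u j) i)

/-- Sum of the `k` largest entries of `u`. -/
noncomputable def pSumDesc {n : ℕ} (u : Fin n → ℝ) (k : ℕ) : ℝ :=
  ∑ i ∈ Finset.univ.filter (fun i : Fin n => (i : ℕ) < k), sortDesc u i

/-- `Majorizes u v` means `u ≻ v`: all partial sums of the sorted `u` dominate
those of `v`, and the total sums coincide. -/
def Majorizes {n : ℕ} (u v : Fin n → ℝ) : Prop :=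
  (∀ k : ℕ, pSumDesc v k ≤ pSumDesc u k) ∧ ∑ i, u i = ∑ i, v i

/-!
If `Q = ∑ⱼ Dⱼ P Rⱼ`, then, since a doubly stochastic matrix can only lower the partial sums of
an antitone vector, each column `w` of `Q` has partial sums at most those of `P r_w`, where
`r_w` is column `w` of `∑ⱼ Rⱼ`. For the two columns of `P` this says exactly
`q_w ν_k ≤ p r_w(1) μ_k` for all `k`, i.e. `q_w max {0, h_w} ≤ p r_w(1)`, and summing over `w`
gives the inequality because the first row of `∑ⱼ Rⱼ` sums to `1`.

Conversely, if the inequality holds, pick `t_w ∈ [max {0, h_w}, 1]` with `∑_w q_w t_w = p`.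
The same computation shows that `q^{|w}` is majorized by `t_w p^{|1} + (1 - t_w) p^{|2}`, so by
the Hardy–Littlewood–Pólya theorem it is a doubly stochastic image of it; one such term for each
column `w` realizes `Q`.
-/

section PrefixSum

variable {n : ℕ}

noncomputable def prefixSum (u : Fin n → ℝ) (k : ℕ) : ℝ :=
  ∑ i ∈ univ.filter (fun i : Fin n => (i : ℕ) < k), u i

lemma prefixSum_zero (u : Fin n → ℝ) : prefixSum u 0 = 0 := by
  simp [prefixSum]

lemma prefixSum_min (u : Fin n → ℝ) (k : ℕ) : prefixSum u (min k n) = prefixSum u k := by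
  unfold prefixSum
  congr 1
  ext i
  simp

lemma prefixSum_eq_sum (u : Fin n → ℝ) : prefixSum u n = ∑ i, u i := by
  simp [prefixSum]

lemma prefixSum_succ (u : Fin n → ℝ) (k : Fin n) :
    prefixSum u (k + 1) = prefixSum u k + u k := by
  have h : univ.filter (fun i : Fin n => (i : ℕ) < k + 1)
      = insert k (univ.filter fun i : Fin n => (i : ℕ) < k) := by
    ext i
    simp only [mem_filter, mem_univ, true_and, mem_insert, Fin.ext_iff]
    omega
  rw [prefixSum, prefixSum, h, sum_insert (by simp), add_comm]

lemma sum_filter_le_eq_prefixSum (u : Fin n → ℝ) (k : Fin n) :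
    ∑ i with i ≤ k, u i = prefixSum u (k + 1) := by
  refine sum_congr (filter_congr fun i _ => ?_) fun _ _ => rfl
  rw [Fin.le_def]
  omega

lemma prefixSum_eq_of_eq_zero {f : Fin n → ℝ} {a b : ℕ} (hab : a ≤ b)
    (hf : ∀ i : Fin n, a ≤ i → (i : ℕ) < b → f i = 0) : prefixSum f b = prefixSum f a := by
  refine (sum_subset (fun i => ?_) fun i hib hia => hf i ?_ ?_).symm <;>
    simp_all only [mem_filter, mem_univ, true_and, not_lt]
  omega

lemma prefixSum_add (u v : Fin n → ℝ) (k : ℕ) :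
    prefixSum (u + v) k = prefixSum u k + prefixSum v k :=
  sum_add_distrib ..

lemma prefixSum_sub (u v : Fin n → ℝ) (k : ℕ) :
    prefixSum (u - v) k = prefixSum u k - prefixSum v k :=
  sum_sub_distrib ..

lemma prefixSum_div (u : Fin n → ℝ) (c : ℝ) (k : ℕ) :
    prefixSum (fun i => u i / c) k = prefixSum u k / c :=
  (sum_div ..).symm

lemma prefixSum_finsetSum {ι : Type*} (s : Finset ι) (f : ι → Fin n → ℝ) (k : ℕ) :
    prefixSum (∑ j ∈ s, f j) k = ∑ j ∈ s, prefixSum (f j) k := by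
  simp only [prefixSum, Finset.sum_apply]
  exact sum_comm

lemma prefixSum_single (i : Fin n) (c : ℝ) (k : ℕ) :
    prefixSum (Pi.single i c) k = if (i : ℕ) < k then c else 0 := by
  simp [prefixSum, sum_pi_single']

lemma prefixSum_mulVec {ι : Type*} [Fintype ι] (M : Matrix (Fin n) ι ℝ) (r : ι → ℝ) (k : ℕ) :
    prefixSum (M *ᵥ r) k = ∑ y, r y * prefixSum (fun x => M x y) k := by
  simp only [prefixSum, mulVec, dotProduct, mul_sum]
  rw [sum_comm]
  simp_rw [mul_comm]

lemma forall_prefixSum_le_of_succ {u v : Fin n → ℝ}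
    (h : ∀ k : Fin n, prefixSum u (k + 1) ≤ prefixSum v (k + 1)) (l : ℕ) :
    prefixSum u l ≤ prefixSum v l := by
  rw [← prefixSum_min, ← prefixSum_min v]
  rcases Nat.eq_zero_or_pos (min l n) with h0 | hpos
  · simp [h0, prefixSum_zero]
  · have := h ⟨min l n - 1, by omega⟩
    rwa [show min l n - 1 + 1 = min l n by omega] at this

lemma pSumDesc_eq_prefixSum {u : Fin n → ℝ} (hu : Antitone u) : pSumDesc u = prefixSum u := by
  have hsort : Tuple.sort (fun j => -u j) = 1 :=
    Tuple.sort_eq_refl_iff_monotone.mpr fun a b hab => neg_le_neg (hu hab)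
  funext k
  simp [pSumDesc, sortDesc, prefixSum, hsort]

lemma sum_mul_le_prefixSum {u c : Fin n → ℝ} (hu : Antitone u) (hc0 : ∀ i, 0 ≤ c i)
    (hc1 : ∀ i, c i ≤ 1) {k : ℕ} (hk : k ≤ n) (hc : ∑ i, c i = k) :
    ∑ i, c i * u i ≤ prefixSum u k := by
  rcases Nat.eq_zero_or_pos n with rfl | hn
  · simp [prefixSum]
  set θ := u ⟨k - 1, by omega⟩
  -- Each term `(c i - [i < k]) * (u i - θ)` is nonpositive, and the weights sum to zero.
  have hterm : ∀ i, (c i - if (i : ℕ) < k then 1 else 0) * (u i - θ) ≤ 0 := by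
    intro i
    split_ifs with hi
    · exact mul_nonpos_of_nonpos_of_nonneg (by linarith [hc1 i])
        (sub_nonneg.2 (hu (Fin.mk_le_mk.2 (by omega) : i ≤ _)))
    · exact mul_nonpos_of_nonneg_of_nonpos (by linarith [hc0 i])
        (sub_nonpos.2 (hu (Fin.mk_le_mk.2 (by omega) : _ ≤ i)))
  have hsplit : ∑ i, c i * u i - prefixSum u k
      = ∑ i, (c i - if (i : ℕ) < k then 1 else 0) * (u i - θ) := by
    simp only [sub_mul, mul_sub, sum_sub_distrib, ← sum_mul, hc, ite_mul, one_mul,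
      zero_mul, ← sum_filter, prefixSum, sum_const, nsmul_eq_mul, Fin.card_filter_val_lt,
      min_eq_right hk]
    ring
  linarith [sum_nonpos fun i (_ : i ∈ univ) => hterm i]

lemma prefixSum_mulVec_le {D : Matrix (Fin n) (Fin n) ℝ} (hD : D ∈ doublyStochastic ℝ (Fin n))
    {z : Fin n → ℝ} (hz : Antitone z) (k : ℕ) : prefixSum (D *ᵥ z) k ≤ prefixSum z k := by
  rw [← prefixSum_min, ← prefixSum_min z]
  set k' := min k n
  have hc : ∑ x, prefixSum (fun i => D i x) k' = k' := by
    rw [← prefixSum_finsetSum]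
    simp [prefixSum, Finset.sum_apply, sum_row_of_mem_doublyStochastic hD,
      Fin.card_filter_val_lt, k', min_comm]
  calc prefixSum (D *ᵥ z) k' = ∑ x, prefixSum (fun i => D i x) k' * z x := by
        rw [prefixSum_mulVec]
        exact sum_congr rfl fun x _ => mul_comm _ _
    _ ≤ prefixSum z k' := sum_mul_le_prefixSum hz
        (fun x => sum_nonneg fun i _ => nonneg_of_mem_doublyStochastic hD)
        (fun x => (sum_le_sum_of_subset_of_nonneg (subset_univ _)
          fun i _ _ => nonneg_of_mem_doublyStochastic hD).trans
            (sum_col_of_mem_doublyStochastic hD x).le)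
        (min_le_right _ _) hc

end PrefixSum

section HardyLittlewoodPolya

variable {n : ℕ}

lemma exists_transfer_pair {u v : Fin n → ℝ} (hle : ∀ k, prefixSum u k ≤ prefixSum v k)
    (heq : ∑ i, u i = ∑ i, v i) (huv : u ≠ v) :
    ∃ j k : Fin n, j < k ∧ u j < v j ∧ v k < u k ∧ ∀ i, j < i → i < k → u i = v i := by
  have hS : (univ.filter fun i => v i < u i).Nonempty := by
    by_contra h
    simp only [not_nonempty_iff_eq_empty, filter_eq_empty_iff, mem_univ, true_imp_iff,
      not_lt] at h
    exact huv (funext fun i => ((sum_eq_sum_iff_of_le fun i _ => @h i).1 heq) i (mem_univ i))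
  set k := (univ.filter fun i => v i < u i).min' hS
  have hk : v k < u k := (mem_filter.1 (min'_mem _ hS)).2
  have hbefore : ∀ i, i < k → u i ≤ v i := fun i hik =>
    not_lt.1 fun h => (min'_le _ i (mem_filter.2 ⟨mem_univ i, h⟩)).not_gt hik
  have hT : (univ.filter fun i => i < k ∧ u i < v i).Nonempty := by
    have h := hle (k + 1)
    rw [prefixSum_succ, prefixSum_succ] at h
    obtain ⟨i, hi, hlt⟩ := exists_lt_of_sum_lt (show prefixSum u k < prefixSum v k by linarith)
    exact ⟨i, mem_filter.2 ⟨mem_univ i, Fin.lt_def.2 (mem_filter.1 hi).2, hlt⟩⟩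
  set j := (univ.filter fun i => i < k ∧ u i < v i).max' hT
  obtain ⟨hjk, hj⟩ := (mem_filter.1 (max'_mem _ hT)).2
  refine ⟨j, k, hjk, hj, hk, fun i hji hik => (hbefore i hik).antisymm (not_lt.1 fun h => ?_)⟩
  exact (le_max' _ i (mem_filter.2 ⟨mem_univ i, hik, h⟩)).not_gt hji

/-- Moving mass `δ` from coordinate `j` to coordinate `k` of `v` is the doubly stochastic
matrix `(1 - s) • 1 + s • swap j k` with `s = δ / (v j - v k)`. -/
lemma exists_mem_doublyStochastic_transfer (v : Fin n → ℝ) {j k : Fin n} (hjk : j ≠ k)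
    {δ : ℝ} (hδ0 : 0 ≤ δ) (hδ : δ ≤ v j - v k) :
    ∃ T ∈ doublyStochastic ℝ (Fin n), v - Pi.single j δ + Pi.single k δ = T *ᵥ v := by
  set s := δ / (v j - v k)
  have hs0 : 0 ≤ s := div_nonneg hδ0 (hδ0.trans hδ)
  have hs1 : s ≤ 1 := div_le_one_of_le₀ hδ (hδ0.trans hδ)
  have hsδ : s * (v j - v k) = δ := div_mul_cancel_of_imp fun h => by linarith
  refine ⟨(1 - s) • 1 + s • (Equiv.swap j k).permMatrix ℝ,
    convex_doublyStochastic (one_mem _) permMatrix_mem_doublyStochastic (by linarith) hs0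
      (by ring), ?_⟩
  funext i
  simp only [add_mulVec, smul_mulVec, one_mulVec, permMatrix_mulVec, Pi.add_apply,
    Pi.sub_apply, Pi.smul_apply, Function.comp_apply, smul_eq_mul, Pi.single_apply]
  rcases eq_or_ne i j with rfl | hij
  · simp only [↓reduceIte, hjk, add_zero, Equiv.swap_apply_left]; linarith
  rcases eq_or_ne i k with rfl | hik
  · simp only [hij, ↓reduceIte, sub_zero, Equiv.swap_apply_right]; linarith
  · simp only [hij, ↓reduceIte, sub_zero, hik, add_zero, Equiv.swap_apply_of_ne_of_ne hij hik]
    ring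

lemma exists_transfer_step {u v : Fin n → ℝ} (hu : Antitone u)
    (hle : ∀ k, prefixSum u k ≤ prefixSum v k) (heq : ∑ i, u i = ∑ i, v i) (huv : u ≠ v) :
    ∃ v', (∃ T ∈ doublyStochastic ℝ (Fin n), v' = T *ᵥ v) ∧
      (∀ l, prefixSum u l ≤ prefixSum v' l) ∧ ∑ i, u i = ∑ i, v' i ∧
      #{i | u i ≠ v' i} < #{i | u i ≠ v i} := by
  obtain ⟨j, k, hjk, hj, hk, hmid⟩ := exists_transfer_pair hle heq huv
  set δ := min (v j - u j) (u k - v k)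
  have hδ : 0 < δ := lt_min (by linarith) (by linarith)
  have hδj : δ ≤ v j - u j := min_le_left _ _
  have hδk : δ ≤ u k - v k := min_le_right _ _
  set v' : Fin n → ℝ := v - Pi.single j δ + Pi.single k δ with hv'
  have hv'i : ∀ i, v' i = v i - (if i = j then δ else 0) + (if i = k then δ else 0) := by
    intro i; simp [v', Pi.single_apply]
  refine ⟨v',
    exists_mem_doublyStochastic_transfer v hjk.ne hδ.le (by linarith [hu hjk.le]), ?_, ?_, ?_⟩
  · intro l
    rw [hv', prefixSum_add, prefixSum_sub, prefixSum_single, prefixSum_single]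
    by_cases hjl : (j : ℕ) < l
    · by_cases hkl : (k : ℕ) < l
      · simp only [if_pos hjl, if_pos hkl]; linarith [hle l]
      -- Between `j` and `k` the vectors agree, so the surplus of `v` over `u` at `j` persists.
      have hgap : prefixSum (v - u) l = prefixSum (v - u) (j + 1) :=
        prefixSum_eq_of_eq_zero hjl fun i hji hil => sub_eq_zero.2
          (hmid i (Fin.lt_def.2 (by omega)) (Fin.lt_def.2 (by omega))).symm
      rw [prefixSum_succ, prefixSum_sub, prefixSum_sub] at hgap
      simp only [if_pos hjl, if_neg hkl, Pi.sub_apply] at hgap ⊢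
      linarith [hle j]
    · have hkl : ¬ (k : ℕ) < l := fun h => hjl (lt_trans (Fin.lt_def.1 hjk) h)
      simp only [if_neg hjl, if_neg hkl]; linarith [hle l]
  · simp only [v', sum_add_distrib, sum_sub_distrib, Pi.add_apply, Pi.sub_apply, sum_pi_single',
      mem_univ, if_true, heq]
    ring
  · have hsub : univ.filter (fun i => u i ≠ v' i) ⊆ univ.filter fun i => u i ≠ v i := by
      intro i
      simp only [mem_filter, mem_univ, true_and, hv'i]
      rcases eq_or_ne i j with rfl | hij
      · exact fun _ => hj.ne
      rcases eq_or_ne i k with rfl | hik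
      · exact fun _ => hk.ne'
      · simp [hij, hik]
    refine card_lt_card ((ssubset_iff_of_subset hsub).2 ?_)
    rcases min_choice (v j - u j) (u k - v k) with hmin | hmin
    · have hδeq : δ = v j - u j := hmin
      exact ⟨j, by simp [hj.ne], by simp [hv'i, hjk.ne, hδeq]⟩
    · have hδeq : δ = u k - v k := hmin
      exact ⟨k, by simp [hk.ne'], by simp [hv'i, hjk.ne', hδeq]⟩

/-- The Hardy–Littlewood–Pólya theorem, proved by repeated Robin Hood transfers. -/
theorem exists_mem_doublyStochastic_eq_mulVec {u v : Fin n → ℝ} (hu : Antitone u)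
    (hle : ∀ k, prefixSum u k ≤ prefixSum v k) (heq : ∑ i, u i = ∑ i, v i) :
    ∃ D ∈ doublyStochastic ℝ (Fin n), u = D *ᵥ v := by
  induction hN : #{i | u i ≠ v i} using Nat.strong_induction_on generalizing v with
  | _ N ih =>
  by_cases huv : u = v
  · exact ⟨1, one_mem _, by rw [huv, one_mulVec]⟩
  obtain ⟨v', ⟨T, hT, rfl⟩, hle', heq', hlt⟩ := exists_transfer_step hu hle heq huv
  obtain ⟨D, hD, hDu⟩ := ih _ (hN ▸ hlt) hle' heq' rfl
  exact ⟨D * T, mul_mem hD hT, by rw [hDu, mulVec_mulVec]⟩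

end HardyLittlewoodPolya

section CondMaj

variable {n ℓ m : ℕ}

lemma JointProb.sum_colSum {P : Matrix (Fin n) (Fin ℓ) ℝ} (hP : JointProb P) :
    ∑ y, ColSum P y = 1 := by
  rw [← hP.2]
  exact sum_comm

lemma JointProb.colSum_pos {P : Matrix (Fin n) (Fin ℓ) ℝ} (hP : JointProb P)
    (hPstd : StdForm P) (y : Fin ℓ) : 0 < ColSum P y := by
  obtain ⟨x, hx⟩ := hPstd.2.1 y
  exact sum_pos' (fun x _ => hP.1 x y) ⟨x, mem_univ x, (hP.1 x y).lt_of_ne' hx⟩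

lemma StdForm.antitone_col {P : Matrix (Fin n) (Fin ℓ) ℝ} (hP : StdForm P) (y : Fin ℓ) :
    Antitone fun x => P x y :=
  fun _ _ h => hP.1 y _ _ h

lemma antitone_mulVec {P : Matrix (Fin n) (Fin ℓ) ℝ} (hP : ∀ y, Antitone fun x => P x y)
    {r : Fin ℓ → ℝ} (hr : ∀ y, 0 ≤ r y) : Antitone (P *ᵥ r) :=
  fun _ _ h => by
    simp only [mulVec, dotProduct]
    exact sum_le_sum fun y _ => mul_le_mul_of_nonneg_right (hP y h) (hr y)

lemma sum_mulVec_eq (P : Matrix (Fin n) (Fin ℓ) ℝ) (r : Fin ℓ → ℝ) :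
    ∑ x, (P *ᵥ r) x = ∑ y, r y * ColSum P y := by
  simpa only [prefixSum_eq_sum, ColSum] using prefixSum_mulVec P r n

lemma col_sum_mul_mul {J : ℕ} (D : Fin J → Matrix (Fin n) (Fin n) ℝ)
    (P : Matrix (Fin n) (Fin ℓ) ℝ) (R : Fin J → Matrix (Fin ℓ) (Fin m) ℝ) (w : Fin m) :
    (fun x => (∑ j, D j * P * R j) x w) = ∑ j, D j *ᵥ (P *ᵥ fun y => R j y w) := by
  funext x
  simp only [Matrix.sum_apply, Finset.sum_apply, mulVec_mulVec]
  rfl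

lemma colSum_sum_mul_mul {J : ℕ} {D : Fin J → Matrix (Fin n) (Fin n) ℝ}
    (hD : ∀ j, D j ∈ doublyStochastic ℝ (Fin n)) (P : Matrix (Fin n) (Fin ℓ) ℝ)
    (R : Fin J → Matrix (Fin ℓ) (Fin m) ℝ) (w : Fin m) :
    ColSum (∑ j, D j * P * R j) w = ∑ y, (∑ j, R j) y w * ColSum P y := by
  rw [ColSum, ← prefixSum_eq_sum, col_sum_mul_mul, prefixSum_finsetSum]
  simp only [prefixSum_eq_sum, sum_mulVec_of_mem_doublyStochastic (hD _), sum_mulVec_eq,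
    Matrix.sum_apply, sum_mul]
  exact sum_comm

lemma prefixSum_col_sum_mul_mul_le {J : ℕ} {D : Fin J → Matrix (Fin n) (Fin n) ℝ}
    (hD : ∀ j, D j ∈ doublyStochastic ℝ (Fin n)) {P : Matrix (Fin n) (Fin ℓ) ℝ}
    (hP : ∀ y, Antitone fun x => P x y) {R : Fin J → Matrix (Fin ℓ) (Fin m) ℝ}
    (hR : ∀ j y w, 0 ≤ R j y w) (w : Fin m) (k : ℕ) :
    prefixSum (fun x => (∑ j, D j * P * R j) x w) k
      ≤ ∑ y, (∑ j, R j) y w * prefixSum (fun x => P x y) k := by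
  rw [col_sum_mul_mul, prefixSum_finsetSum]
  calc _ ≤ ∑ j, prefixSum (P *ᵥ fun y => R j y w) k :=
        sum_le_sum fun j _ => prefixSum_mulVec_le (hD j) (antitone_mulVec hP (hR j · w)) k
    _ = _ := by
      simp only [prefixSum_mulVec, Matrix.sum_apply, sum_mul]
      exact sum_comm

lemma condMaj_of_forall_col {P : Matrix (Fin n) (Fin ℓ) ℝ} {Q : Matrix (Fin n) (Fin m) ℝ}
    (D : Fin m → Matrix (Fin n) (Fin n) ℝ) (r : Fin m → Fin ℓ → ℝ)
    (hD : ∀ w, D w ∈ doublyStochastic ℝ (Fin n)) (hr : ∀ w y, 0 ≤ r w y)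
    (hrsum : ∀ y, ∑ w, r w y = 1) (hQ : ∀ w, (fun x => Q x w) = D w *ᵥ (P *ᵥ r w)) :
    CondMaj P Q := by
  set R : Fin m → Matrix (Fin ℓ) (Fin m) ℝ := fun w => of fun y w' => if w' = w then r w y else 0
  have hRsum : ∀ y w', (∑ w, R w) y w' = r w' y := by
    intro y w'
    simp [R, Matrix.sum_apply]
  refine ⟨m, D, R,
    fun w => mem_doublyStochastic_iff_sum.1 (hD w), fun w y w' => ?_,
    ⟨fun y w' => by rw [hRsum]; exact hr w' y, fun y => by simp only [hRsum, hrsum]⟩, ?_⟩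
  · simp only [R, of_apply]; split_ifs <;> simp [hr]
  ext x w'
  have hcol := congrFun (col_sum_mul_mul D P R w') x
  rw [hcol, Finset.sum_apply, sum_eq_single w' (fun j _ hj => ?_) (by simp)]
  · simpa [R] using congrFun (hQ w') x
  · simp [R, Ne.symm hj, ← Pi.zero_def]

end CondMaj

lemma exists_sum_mul_eq_of_le {ι : Type*} [Fintype ι] {q a b : ι → ℝ} {s : ℝ}
    (hab : ∀ i, a i ≤ b i) (ha : ∑ i, q i * a i ≤ s) (hb : s ≤ ∑ i, q i * b i) :
    ∃ t : ι → ℝ, (∀ i, a i ≤ t i ∧ t i ≤ b i) ∧ ∑ i, q i * t i = s := by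
  set d := ∑ i, q i * b i - ∑ i, q i * a i
  set c := (s - ∑ i, q i * a i) / d
  have hc0 : 0 ≤ c := div_nonneg (by linarith) (by linarith)
  have hc1 : c ≤ 1 := div_le_one_of_le₀ (by linarith) (by linarith)
  -- When `d = 0` the junk value `c = 0` is the right one, since then `s = ∑ i, q i * a i`.
  have hcd : c * d = s - ∑ i, q i * a i := div_mul_cancel_of_imp fun h => by linarith
  refine ⟨fun i => a i + c * (b i - a i), fun i => ⟨?_, ?_⟩, ?_⟩
  · nlinarith [hab i]
  · nlinarith [hab i]
  · have : ∑ i, q i * (a i + c * (b i - a i)) = ∑ i, q i * a i + c * d := by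
      simp only [d, mul_sub, mul_sum, ← sum_sub_distrib, ← sum_add_distrib]
      exact sum_congr rfl fun i _ => by ring
    linarith

section TwoColumns

variable {n m : ℕ}

lemma muP_eq (P : Matrix (Fin n) (Fin 2) ℝ) (k : Fin n) :
    muP P k = prefixSum (fun x => P x 0 / ColSum P 0) (k + 1)
      - prefixSum (fun x => P x 1 / ColSum P 1) (k + 1) := by
  rw [muP, sum_sub_distrib, sum_filter_le_eq_prefixSum, sum_filter_le_eq_prefixSum]

lemma nuPQ_eq (P : Matrix (Fin n) (Fin 2) ℝ) (Q : Matrix (Fin n) (Fin m) ℝ) (w : Fin m)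
    (k : Fin n) :
    nuPQ P Q w k = prefixSum (fun x => Q x w / ColSum Q w) (k + 1)
      - prefixSum (fun x => P x 1 / ColSum P 1) (k + 1) := by
  rw [nuPQ, sum_sub_distrib, sum_filter_le_eq_prefixSum, sum_filter_le_eq_prefixSum]

lemma nuPQ_le_muP {P : Matrix (Fin n) (Fin 2) ℝ} {Q : Matrix (Fin n) (Fin m) ℝ} {w : Fin m}
    (hP : Antitone fun x => P x 0 / ColSum P 0) (hQ : Antitone fun x => Q x w / ColSum Q w)
    (h : Majorizes (fun x => P x 0 / ColSum P 0) (fun x => Q x w / ColSum Q w)) (k : Fin n) :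
    nuPQ P Q w k ≤ muP P k := by
  have := h.1 (k + 1)
  rw [pSumDesc_eq_prefixSum hP, pSumDesc_eq_prefixSum hQ] at this
  rw [nuPQ_eq, muP_eq]
  linarith

lemma prefixSum_col_le_iff {P : Matrix (Fin n) (Fin 2) ℝ} {Q : Matrix (Fin n) (Fin m) ℝ}
    {w : Fin m} (hP : ∀ y, ColSum P y ≠ 0) (hQ : ColSum Q w ≠ 0) {r : Fin 2 → ℝ}
    (hcol : ColSum Q w = ∑ y, r y * ColSum P y) (k : Fin n) :
    prefixSum (fun x => Q x w) (k + 1) ≤ ∑ y, r y * prefixSum (fun x => P x y) (k + 1) ↔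
      ColSum Q w * nuPQ P Q w k ≤ ColSum P 0 * r 0 * muP P k := by
  rw [Fin.sum_univ_two] at hcol ⊢
  have key : ColSum Q w * nuPQ P Q w k - ColSum P 0 * r 0 * muP P k
      = prefixSum (fun x => Q x w) (k + 1) - (r 0 * prefixSum (fun x => P x 0) (k + 1)
        + r 1 * prefixSum (fun x => P x 1) (k + 1)) := by
    rw [nuPQ_eq, muP_eq, prefixSum_div, prefixSum_div, prefixSum_div]
    field_simp [hP 0, hP 1]
    rw [hcol]
    ring
  constructor <;> intro <;> linarith

/-- The coefficient `max {0, h_w}` of the theorem. -/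
noncomputable def ratioMax (P : Matrix (Fin n) (Fin 2) ℝ) (Q : Matrix (Fin n) (Fin m) ℝ)
    (w : Fin m) : ℝ :=
  (insert (0 : ℝ) ((Finset.univ.filter fun k => 0 < muP P k).image
    fun k => nuPQ P Q w k / muP P k)).max' (Finset.insert_nonempty _ _)

lemma ratioMax_nonneg (P : Matrix (Fin n) (Fin 2) ℝ) (Q : Matrix (Fin n) (Fin m) ℝ)
    (w : Fin m) : 0 ≤ ratioMax P Q w :=
  le_max' _ 0 (mem_insert_self _ _)

lemma ratioMax_le_iff {P : Matrix (Fin n) (Fin 2) ℝ} {Q : Matrix (Fin n) (Fin m) ℝ} {w : Fin m}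
    {t : ℝ} (ht : 0 ≤ t) :
    ratioMax P Q w ≤ t ↔ ∀ k, 0 < muP P k → nuPQ P Q w k ≤ t * muP P k := by
  simp only [ratioMax, max'_le_iff, forall_mem_insert, mem_image, mem_filter, mem_univ,
    true_and, ht, forall_exists_index, and_imp, forall_apply_eq_imp_iff₂]
  exact forall₂_congr fun k hk => div_le_iff₀ hk

lemma nuPQ_le_mul_muP {P : Matrix (Fin n) (Fin 2) ℝ} {Q : Matrix (Fin n) (Fin m) ℝ}
    {w : Fin m} {t : ℝ} (ht : ratioMax P Q w ≤ t) (ht1 : t ≤ 1) {k : Fin n}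
    (hk : nuPQ P Q w k ≤ muP P k) : nuPQ P Q w k ≤ t * muP P k := by
  rcases lt_or_ge 0 (muP P k) with hμ | hμ
  · exact (ratioMax_le_iff ((ratioMax_nonneg P Q w).trans ht)).1 ht k hμ
  · nlinarith

theorem sum_colSum_mul_ratioMax_le_of_condMaj {P : Matrix (Fin n) (Fin 2) ℝ}
    {Q : Matrix (Fin n) (Fin m) ℝ} (hPanti : ∀ y, Antitone fun x => P x y)
    (hP : ∀ y, 0 < ColSum P y) (hQ : ∀ w, 0 < ColSum Q w) (h : CondMaj P Q) :
    ∑ w, ColSum Q w * ratioMax P Q w ≤ ColSum P 0 := by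
  obtain ⟨J, D, R, hD, hR, hRs, rfl⟩ := h
  set Q := ∑ j, D j * P * R j
  have hD' : ∀ j, D j ∈ doublyStochastic ℝ (Fin n) :=
    fun j => mem_doublyStochastic_iff_sum.2 (hD j)
  have hw : ∀ w, ColSum Q w * ratioMax P Q w ≤ ColSum P 0 * (∑ j, R j) 0 w := by
    intro w
    rw [← le_div_iff₀' (hQ w)]
    refine (ratioMax_le_iff (div_nonneg (mul_nonneg (hP 0).le (hRs.1 0 w)) (hQ w).le)).2
      fun k _ => ?_
    rw [div_mul_eq_mul_div, le_div_iff₀' (hQ w)]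
    exact (prefixSum_col_le_iff (fun y => (hP y).ne') (hQ w).ne'
      (colSum_sum_mul_mul hD' P R w) k).1 (prefixSum_col_sum_mul_mul_le hD' hPanti hR w _)
  calc _ ≤ ∑ w, ColSum P 0 * (∑ j, R j) 0 w := sum_le_sum fun w _ => hw w
    _ = ColSum P 0 := by rw [← mul_sum, hRs.2 0, mul_one]

theorem condMaj_of_sum_colSum_mul_ratioMax_le {P : Matrix (Fin n) (Fin 2) ℝ}
    {Q : Matrix (Fin n) (Fin m) ℝ} (hPsum : ColSum P 0 + ColSum P 1 = 1)
    (hP : ∀ y, 0 < ColSum P y) (hQ : ∀ w, 0 < ColSum Q w) (hQsum : ∑ w, ColSum Q w = 1)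
    (hQanti : ∀ w, Antitone fun x => Q x w) (hνμ : ∀ w k, nuPQ P Q w k ≤ muP P k)
    (h : ∑ w, ColSum Q w * ratioMax P Q w ≤ ColSum P 0) : CondMaj P Q := by
  have hle1 : ∀ w, ratioMax P Q w ≤ 1 :=
    fun w => (ratioMax_le_iff zero_le_one).2 fun k _ => by simpa using hνμ w k
  obtain ⟨t, ht, htsum⟩ := exists_sum_mul_eq_of_le hle1 h
    (by simp only [mul_one, hQsum]; linarith [hP 1])
  -- `P *ᵥ r w = q_w • (t_w • p^{|1} + (1 - t_w) • p^{|2})`, the mixture majorizing `q^{|w}`.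
  set r : Fin m → Fin 2 → ℝ :=
    fun w => ![ColSum Q w * t w / ColSum P 0, ColSum Q w * (1 - t w) / ColSum P 1]
  have hr0 : ∀ w, ColSum P 0 * r w 0 = ColSum Q w * t w := fun w => by
    simp [r, mul_div_cancel₀ _ (hP 0).ne']
  have hcol : ∀ w, ColSum Q w = ∑ y, r w y * ColSum P y := fun w => by
    simp only [r, Fin.sum_univ_two, cons_val_zero, cons_val_one, cons_val_fin_one,
      div_mul_cancel₀ _ (hP 0).ne', div_mul_cancel₀ _ (hP 1).ne']
    ring
  have hDQ : ∀ w, ∃ D ∈ doublyStochastic ℝ (Fin n), (fun x => Q x w) = D *ᵥ (P *ᵥ r w) := by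
    intro w
    refine exists_mem_doublyStochastic_eq_mulVec (hQanti w)
      (forall_prefixSum_le_of_succ fun k => ?_) ?_
    · rw [prefixSum_mulVec, prefixSum_col_le_iff (fun y => (hP y).ne') (hQ w).ne' (hcol w),
        hr0, mul_assoc]
      exact mul_le_mul_of_nonneg_left (nuPQ_le_mul_muP (ht w).1 (ht w).2 (hνμ w k)) (hQ w).le
    · rw [sum_mulVec_eq, ← hcol w]
      rfl
  choose D hD hDQ using hDQ
  refine condMaj_of_forall_col D r hD (fun w y => ?_) (fun y => ?_) hDQ
  · have ht0 : 0 ≤ t w := (ratioMax_nonneg P Q w).trans (ht w).1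
    fin_cases y
    · exact div_nonneg (mul_nonneg (hQ w).le ht0) (hP 0).le
    · exact div_nonneg (mul_nonneg (hQ w).le (sub_nonneg.2 (ht w).2)) (hP 1).le
  · fin_cases y
    · simp [r, ← sum_div, htsum, (hP 0).ne']
    · simp only [r, Fin.mk_one, cons_val_one, cons_val_fin_one, mul_sub, mul_one, ← sum_div,
        sum_sub_distrib, hQsum, htsum]
      rw [show 1 - ColSum P 0 = ColSum P 1 by linarith, div_self (hP 1).ne']

end TwoColumns

theorem stmt15_general {n m : ℕ} (P : Matrix (Fin n) (Fin 2) ℝ) (Q : Matrix (Fin n) (Fin m) ℝ)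
    (hP : JointProb P) (hQ : JointProb Q) (hPstd : StdForm P) (hQstd : StdForm Q)
    (hmajw : ∀ w, Majorizes (fun x => P x 0 / ColSum P 0) (fun x => Q x w / ColSum Q w)) :
    CondMaj P Q ↔
      ∑ w, ColSum Q w *
        ((insert (0 : ℝ) ((Finset.univ.filter fun k => 0 < muP P k).image
          fun k => nuPQ P Q w k / muP P k)).max' (Finset.insert_nonempty _ _)) ≤
        ColSum P 0 := by
  have hPpos := hP.colSum_pos hPstd
  have hQpos := hQ.colSum_pos hQstd
  have hdiv {f : Fin n → ℝ} {c : ℝ} (hf : Antitone f) (hc : 0 < c) : Antitone (f · / c) :=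
    fun _ _ h => div_le_div_of_nonneg_right (hf h) hc.le
  have hνμ : ∀ w k, nuPQ P Q w k ≤ muP P k := fun w =>
    nuPQ_le_muP (hdiv (hPstd.antitone_col 0) (hPpos 0)) (hdiv (hQstd.antitone_col w) (hQpos w))
      (hmajw w)
  exact ⟨sum_colSum_mul_ratioMax_le_of_condMaj hPstd.antitone_col hPpos hQpos,
    condMaj_of_sum_colSum_mul_ratioMax_le (by simpa [Fin.sum_univ_two] using hP.sum_colSum)
      hPpos hQpos hQ.sum_colSum hQstd.antitone_col hνμ⟩

theorem stmt15 {n m : ℕ} (P : Matrix (Fin n) (Fin 2) ℝ) (Q : Matrix (Fin n) (Fin m) ℝ)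
    (hP : JointProb P) (hQ : JointProb Q) (hPstd : StdForm P) (hQstd : StdForm Q)
    (hp0 : 0 < ColSum P 0) (hp1 : ColSum P 0 < 1)
    (hmaj2 : Majorizes (fun x => P x 0 / ColSum P 0) (fun x => P x 1 / ColSum P 1))
    (hmajw : ∀ w, Majorizes (fun x => P x 0 / ColSum P 0) (fun x => Q x w / ColSum Q w)) :
    CondMaj P Q ↔
      ∑ w, ColSum Q w *
        ((insert (0 : ℝ) ((Finset.univ.filter fun k => 0 < muP P k).image
          fun k => nuPQ P Q w k / muP P k)).max' (Finset.insert_nonempty _ _)) ≤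
        ColSum P 0 :=
  stmt15_general P Q hP hQ hPstd hQstd hmajw
end

section
/- For angles α ∈ [0, π/4], max over θ, φ ∈ ℝ of ½(cos²θ cos²φ + cos²(θ−α) cos²(φ−α)) equals ¼(1 + cos α)², attained at θ = φ = α/2. -/
/-!
Write `c = cos α` and `t = cos (2θ - α)`. Halving angles gives the identity
`(1 + c)² / 2 - (cos⁴ θ + cos⁴ (θ - α)) = (1 - t) (2c + cos 2α · (1 + t)) / 2`,
which is nonnegative when `cos α ≥ 0` and `cos 2α ≥ 0`, i.e. for `α ∈ [0, π/4]`.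
AM-GM, `2xy ≤ x² + y²`, reduces the symmetrized product to this one-angle bound, and
`θ = φ = α/2` is the case `t = 1`.
-/

open Real

theorem cos_sq_eq_expand_two_mul_sub (θ α : ℝ) :
    cos θ ^ 2 = (1 + cos (2 * θ - α) * cos α - sin (2 * θ - α) * sin α) / 2 := by
  have h := cos_add (2 * θ - α) α
  rw [sub_add_cancel] at h
  rw [cos_sq, h]
  ring

theorem cos_sub_sq_eq_expand_two_mul_sub (θ α : ℝ) :
    cos (θ - α) ^ 2 = (1 + cos (2 * θ - α) * cos α + sin (2 * θ - α) * sin α) / 2 := by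
  rw [cos_sq, show 2 * (θ - α) = 2 * θ - α - α by ring, cos_sub]
  ring

theorem cos_pow_four_add_cos_sub_pow_four_le {α : ℝ} (hc : 0 ≤ cos α) (hc2 : 0 ≤ cos (2 * α))
    (θ : ℝ) : cos θ ^ 4 + cos (θ - α) ^ 4 ≤ (1 + cos α) ^ 2 / 2 := by
  set t := cos (2 * θ - α)
  have gap : (1 + cos α) ^ 2 / 2 - (cos θ ^ 4 + cos (θ - α) ^ 4)
      = (1 - t) * (2 * cos α + cos (2 * α) * (1 + t)) / 2 := by
    have hθ := cos_sq_eq_expand_two_mul_sub θ α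
    have hθα := cos_sub_sq_eq_expand_two_mul_sub θ α
    rw [show cos θ ^ 4 = (cos θ ^ 2) ^ 2 by ring,
      show cos (θ - α) ^ 4 = (cos (θ - α) ^ 2) ^ 2 by ring, hθ, hθα, cos_two_mul]
    linear_combination (-(sin α ^ 2) / 2) * sin_sq_add_cos_sq (2 * θ - α)
      - (1 - t ^ 2) / 2 * sin_sq_add_cos_sq α
  have ht : t ≤ 1 := cos_le_one _
  have ht' : -1 ≤ t := neg_one_le_cos _
  have : 0 ≤ (1 - t) * (2 * cos α + cos (2 * α) * (1 + t)) :=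
    mul_nonneg (by linarith) (add_nonneg (by positivity) (mul_nonneg hc2 (by linarith)))
  linarith

theorem symmetrized_cos_sq_product_le {α : ℝ} (hc : 0 ≤ cos α) (hc2 : 0 ≤ cos (2 * α))
    (θ φ : ℝ) :
    (1 / 2) * (cos θ ^ 2 * cos φ ^ 2 + cos (θ - α) ^ 2 * cos (φ - α) ^ 2)
      ≤ (1 / 4) * (1 + cos α) ^ 2 := by
  have := two_mul_le_add_sq (cos θ ^ 2) (cos φ ^ 2)
  have := two_mul_le_add_sq (cos (θ - α) ^ 2) (cos (φ - α) ^ 2)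
  have := cos_pow_four_add_cos_sub_pow_four_le hc hc2 θ
  have := cos_pow_four_add_cos_sub_pow_four_le hc hc2 φ
  linarith

theorem cos_sq_half (α : ℝ) : cos (α / 2) ^ 2 = (1 + cos α) / 2 := by
  rw [cos_sq, mul_div_cancel₀ α two_ne_zero]
  ring

theorem stmt19 (α : ℝ) (hα : α ∈ Set.Icc 0 (π / 4)) :
    IsGreatest
      {z : ℝ | ∃ θ φ : ℝ,
        z = (1 / 2) * ((cos θ) ^ 2 * (cos φ) ^ 2 +
          (cos (θ - α)) ^ 2 * (cos (φ - α)) ^ 2)}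
      ((1 / 4) * (1 + cos α) ^ 2) ∧
    (1 / 2) * ((cos (α / 2)) ^ 2 * (cos (α / 2)) ^ 2 +
        (cos (α / 2 - α)) ^ 2 * (cos (α / 2 - α)) ^ 2) =
      (1 / 4) * (1 + cos α) ^ 2 := by
  obtain ⟨hα0, hαπ⟩ := hα
  have hc : 0 ≤ cos α := cos_nonneg_of_mem_Icc ⟨by linarith [pi_pos], by linarith⟩
  have hc2 : 0 ≤ cos (2 * α) := cos_nonneg_of_mem_Icc ⟨by linarith [pi_pos], by linarith⟩
  have attained : (1 / 2) * ((cos (α / 2)) ^ 2 * (cos (α / 2)) ^ 2 +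
      (cos (α / 2 - α)) ^ 2 * (cos (α / 2 - α)) ^ 2) = (1 / 4) * (1 + cos α) ^ 2 := by
    rw [show α / 2 - α = -(α / 2) by ring, cos_neg, cos_sq_half]
    ring
  refine ⟨⟨⟨α / 2, α / 2, attained.symm⟩, ?_⟩, attained⟩
  rintro _ ⟨θ, φ, rfl⟩
  exact symmetrized_cos_sq_product_le hc hc2 θ φ
end
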